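/- Let f : ℝ → ℝ be continuous with f(x) > 0 for all x, let x₀ > 0 and t∞ ∈ (0,∞), and let x : [0, t∞) → ℝ be differentiable with x(0) = x₀, x′(t) = f(x(t)) for all t ∈ [0, t∞), and x(t) → +∞ as t → t∞. Then ∫_0^{t∞} x(t) dt < ∞ if and only if ∫_{x₀}^∞ (u/f(u)) du < ∞; in fact ∫_0^{t∞} x(t) dt = ∫_{x₀}^∞ (u/f(u)) du. -/

import Mathlib

open MeasureTheory Set Filter

/-!
Since `x' = f ∘ x > 0`, the solution `x` increases from `x₀` to `+∞` on `[0, t∞)`, hence maps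
`[0, t∞)` onto `[x₀, ∞)`. The substitution `u = x(t)`, `du = f(x(t)) dt`, valid for monotone
differentiable maps, turns `∫_{x₀}^∞ u / f(u) du` into `∫_0^{t∞} x(t) dt`.
-/

lemma monotoneOn_of_forall_hasDerivWithinAt_nonneg {D : Set ℝ} (hD : Convex ℝ D)
    {x x' : ℝ → ℝ} (hx : ∀ t ∈ D, HasDerivWithinAt x (x' t) D t) (hx' : ∀ t ∈ D, 0 ≤ x' t) :
    MonotoneOn x D :=
  monotoneOn_of_hasDerivWithinAt_nonneg hD (fun t ht => (hx t ht).continuousWithinAt)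
    (fun t ht => (hx t (interior_subset ht)).mono interior_subset)
    (fun t ht => hx' t (interior_subset ht))

lemma image_Ico_eq_Ici_of_tendsto_atTop {a b : ℝ} (hab : a < b) {x : ℝ → ℝ}
    (hcont : ContinuousOn x (Ico a b)) (hmono : MonotoneOn x (Ico a b))
    (hblow : Tendsto x (nhdsWithin b (Iio b)) atTop) :
    x '' Ico a b = Ici (x a) := by
  have ha : a ∈ Ico a b := ⟨le_rfl, hab⟩
  refine Subset.antisymm ?_ fun y hy => ?_
  · rintro _ ⟨t, ht, rfl⟩
    exact hmono ha ht ht.1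
  · have hnear : Ioo a b ∈ nhdsWithin b (Iio b) := Ioo_mem_nhdsLT hab
    obtain ⟨t, hyt, hat, htb⟩ :=
      ((hblow.eventually_ge_atTop y).and (eventually_of_mem hnear fun _ h => h)).exists
    have hsub : Icc a t ⊆ Ico a b := Icc_subset_Ico_right htb
    exact image_mono hsub (intermediate_value_Icc hat.le (hcont.mono hsub) ⟨hy, hyt⟩)

theorem stmt18_general (f : ℝ → ℝ) (hfpos : ∀ u : ℝ, 0 < f u)
    (x₀ : ℝ) (tinf : ℝ) (htinf : 0 < tinf)
    (x : ℝ → ℝ) (hx0 : x 0 = x₀)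
    (hode : ∀ t ∈ Ico 0 tinf, HasDerivWithinAt x (f (x t)) (Ico 0 tinf) t)
    (hblow : Tendsto x (nhdsWithin tinf (Iio tinf)) atTop) :
    (∫⁻ t in Ico 0 tinf, ENNReal.ofReal (x t)) =
        (∫⁻ u in Ici x₀, ENNReal.ofReal (u / f u)) ∧
      ((∫⁻ t in Ico 0 tinf, ENNReal.ofReal (x t)) < ⊤ ↔
        (∫⁻ u in Ici x₀, ENNReal.ofReal (u / f u)) < ⊤) := by
  have hmono : MonotoneOn x (Ico 0 tinf) :=
    monotoneOn_of_forall_hasDerivWithinAt_nonneg (convex_Ico 0 tinf) hode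
      fun t _ => (hfpos (x t)).le
  have himage : x '' Ico 0 tinf = Ici x₀ :=
    hx0 ▸ image_Ico_eq_Ici_of_tendsto_atTop htinf
      (fun t ht => (hode t ht).continuousWithinAt) hmono hblow
  have hsubst : (∫⁻ u in Ici x₀, ENNReal.ofReal (u / f u))
      = ∫⁻ t in Ico 0 tinf, ENNReal.ofReal (x t) := by
    rw [← himage,
      lintegral_image_eq_lintegral_deriv_mul_of_monotoneOn measurableSet_Ico hode hmono]
    refine setLIntegral_congr_fun measurableSet_Ico fun t _ => ?_
    rw [← ENNReal.ofReal_mul (hfpos (x t)).le, mul_div_cancel₀ _ (hfpos (x t)).ne']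
  exact ⟨hsubst.symm, by rw [hsubst]⟩

/-- If `x` solves `x' = f(x)`, `x(0) = x₀ > 0`, on `[0, t∞)` with
`f` continuous positive, `t∞ ∈ (0,∞)` finite, and `x(t) → +∞` as `t → t∞⁻`, then
`∫_0^{t∞} x(t) dt = ∫_{x₀}^∞ u/f(u) du` (in `(0,∞]`); in particular one integral is
finite iff the other is. -/
theorem stmt18 (f : ℝ → ℝ) (hf : Continuous f) (hfpos : ∀ u : ℝ, 0 < f u)
    (x₀ : ℝ) (hx₀ : 0 < x₀) (tinf : ℝ) (htinf : 0 < tinf)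
    (x : ℝ → ℝ) (hx0 : x 0 = x₀)
    (hode : ∀ t ∈ Ico 0 tinf, HasDerivWithinAt x (f (x t)) (Ico 0 tinf) t)
    (hblow : Tendsto x (nhdsWithin tinf (Iio tinf)) atTop) :
    (∫⁻ t in Ico 0 tinf, ENNReal.ofReal (x t)) =
        (∫⁻ u in Ici x₀, ENNReal.ofReal (u / f u)) ∧
      ((∫⁻ t in Ico 0 tinf, ENNReal.ofReal (x t)) < ⊤ ↔
        (∫⁻ u in Ici x₀, ENNReal.ofReal (u / f u)) < ⊤) :=
  stmt18_general f hfpos x₀ tinf htinf x hx0 hode hblow
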